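/- arXiv:2010.15707 — 7 statements merged into one kernel-verified Lean document; each statement's English description precedes it below -/
import Mathlib

section
/- Let F/K be a field extension of characteristic p > 0, let D be a K-linear derivation of F, and let λ ∈ F. Then (λD)^{∘p} = λ^p · D^{∘p} + ((λD)^{∘(p-1)}(λ)) · D as derivations of F. -/
/-!
Write `(l • D)^[n] = ∑ₖ cₙₖ • D^[k]`; the coefficients `cₙₖ` are differential polynomials in `l`
with `c_pp = l ^ p`, `c_p0 = 0` and `c_p1 = (l • D)^[p - 1] l`, so it suffices to show
`c_pk = 0` for `1 < k < p`. In characteristic `p` the `p`-th iterate of a derivation is again a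
derivation, so `∑ₖ c_pk • (D^[k] (x * y) - x * D^[k] y - D^[k] x * y) = 0`. In the free
differential `𝔽_p`-algebra on three generators `l, x, y`, sending all derivatives of `x` and `y`
to `0` except `D x ↦ 1` and `D^[k - 1] y ↦ 1` leaves only `k • c_pk`. As `k` is a unit mod `p`,
`c_pk = 0` there, hence, by naturality of the coefficients, in every differential ring of
characteristic `p`.
-/

open Finset

namespace Derivation

variable {R A : Type*} [CommSemiring R] [CommRing A] [Algebra R A]

theorem iterate_leibniz (D : Derivation R A A) (n : ℕ) (x y : A) :
    (⇑D)^[n] (x * y) =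
      ∑ ij ∈ antidiagonal n, n.choose ij.1 • ((⇑D)^[ij.1] x * (⇑D)^[ij.2] y) := by
  induction n with
  | zero => simp
  | succ n ih =>
    rw [sum_antidiagonal_choose_succ_nsmul (fun i j => (⇑D)^[i] x * (⇑D)^[j] y) n]
    simp only [Function.iterate_succ_apply', ih, map_sum, map_nsmul, leibniz, smul_eq_mul,
      smul_add, sum_add_distrib]
    congr 1
    refine sum_congr rfl fun ij hij => ?_
    rw [mul_comm (D _), Nat.choose_symm_of_eq_add (mem_antidiagonal.1 hij).symm]

theorem iterate_prime_leibniz {p : ℕ} [Fact p.Prime] [CharP A p] (D : Derivation R A A)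
    (x y : A) : (⇑D)^[p] (x * y) = x * (⇑D)^[p] y + (⇑D)^[p] x * y := by
  have hp : p.Prime := Fact.out
  rw [iterate_leibniz, sum_eq_add_of_mem (0, p) (p, 0) (by simp) (by simp) (by simp [hp.ne_zero])]
  · simp [add_comm]
  · rintro ⟨i, j⟩ hij hne
    simp only [HasAntidiagonal.mem_antidiagonal, ne_eq, Prod.mk.injEq] at hij hne
    have hdvd : p ∣ p.choose i := hp.dvd_choose_self (by omega) (by omega)
    rw [nsmul_eq_mul, (CharP.cast_eq_zero_iff A p _).2 hdvd, zero_mul]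

theorem map_algebraMap_zmod {M : Type*} [AddCommMonoid M] [Module A M] [Module R M] {p : ℕ}
    [NeZero p] [Algebra (ZMod p) A] (D : Derivation R A M) (r : ZMod p) :
    D (algebraMap (ZMod p) A r) = 0 := by
  rw [← ZMod.natCast_zmod_val r, _root_.map_natCast, D.map_natCast]

section IterateSmul

variable (D : Derivation R A A) (l : A)

def iterateSmulCoeff : ℕ → ℕ → A
  | 0, k => if k = 0 then 1 else 0
  | n + 1, 0 => l * D (iterateSmulCoeff n 0)
  | n + 1, k + 1 => l * (D (iterateSmulCoeff n (k + 1)) + iterateSmulCoeff n k)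

theorem iterateSmulCoeff_of_lt : ∀ {n k : ℕ}, n < k → iterateSmulCoeff D l n k = 0
  | 0, _ + 1, _ => rfl
  | n + 1, k + 1, h => by
    rw [iterateSmulCoeff, iterateSmulCoeff_of_lt (by omega), iterateSmulCoeff_of_lt (by omega),
      map_zero, add_zero, mul_zero]

theorem iterateSmulCoeff_succ_zero : ∀ n : ℕ, iterateSmulCoeff D l (n + 1) 0 = 0
  | 0 => by simp [iterateSmulCoeff]
  | n + 1 => by rw [iterateSmulCoeff, iterateSmulCoeff_succ_zero n, map_zero, mul_zero]

theorem iterateSmulCoeff_self : ∀ n : ℕ, iterateSmulCoeff D l n n = l ^ n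
  | 0 => by simp [iterateSmulCoeff]
  | n + 1 => by
    rw [iterateSmulCoeff, iterateSmulCoeff_of_lt D l n.lt_succ_self, iterateSmulCoeff_self n,
      map_zero, zero_add, pow_succ']

theorem iterateSmulCoeff_succ_one (n : ℕ) :
    iterateSmulCoeff D l (n + 1) 1 = (⇑(l • D))^[n] l := by
  induction n with
  | zero => simp [iterateSmulCoeff]
  | succ n ih =>
    rw [iterateSmulCoeff, iterateSmulCoeff_succ_zero, add_zero, ih,
      Function.iterate_succ_apply', smul_apply, smul_eq_mul]

theorem iterate_smul_apply (n : ℕ) (x : A) :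
    (⇑(l • D))^[n] x = ∑ k ∈ range (n + 1), iterateSmulCoeff D l n k * (⇑D)^[k] x := by
  induction n with
  | zero => simp [iterateSmulCoeff]
  | succ n ih =>
    have shift : ∑ k ∈ range (n + 1), l * D (iterateSmulCoeff D l n (k + 1)) * (⇑D)^[k + 1] x +
        l * D (iterateSmulCoeff D l n 0) * x =
        ∑ k ∈ range (n + 1), l * D (iterateSmulCoeff D l n k) * (⇑D)^[k] x := by
      have h := sum_range_succ' (fun k => l * D (iterateSmulCoeff D l n k) * (⇑D)^[k] x) (n + 1)
      rw [sum_range_succ, iterateSmulCoeff_of_lt D l n.lt_succ_self, map_zero, mul_zero,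
        zero_mul, add_zero] at h
      exact h.symm
    rw [Function.iterate_succ_apply', ih, smul_apply, smul_eq_mul, map_sum,
      sum_range_succ' _ (n + 1)]
    simp only [leibniz, smul_eq_mul, ← Function.iterate_succ_apply' (⇑D), Nat.succ_eq_add_one,
      iterateSmulCoeff, Function.iterate_zero_apply, mul_add, add_mul, sum_add_distrib, mul_sum]
    rw [add_right_comm, shift, add_comm]
    congr 1 <;> exact sum_congr rfl fun k _ => by ring

theorem map_iterateSmulCoeff {S B F : Type*} [CommSemiring S] [CommRing B] [Algebra S B]
    [FunLike F A B] [RingHomClass F A B] (D' : Derivation S B B) (f : F)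
    (hf : ∀ a, f (D a) = D' (f a)) (n k : ℕ) :
    f (iterateSmulCoeff D l n k) = iterateSmulCoeff D' (f l) n k := by
  induction n generalizing k with
  | zero => cases k <;> simp [iterateSmulCoeff]
  | succ n ih => cases k <;> simp [iterateSmulCoeff, hf, ih]

theorem sum_iterateSmulCoeff_mul_leibniz_sub_eq_zero {p : ℕ} [Fact p.Prime] [CharP A p]
    (x y : A) :
    ∑ k ∈ range (p + 1), iterateSmulCoeff D l p k *
      ((⇑D)^[k] (x * y) - x * (⇑D)^[k] y - (⇑D)^[k] x * y) = 0 := by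
  have h := iterate_prime_leibniz (l • D) x y
  simp only [iterate_smul_apply, mul_sum, sum_mul] at h
  simp only [mul_sub, sum_sub_distrib, h]
  rw [sub_sub, sub_eq_zero, ← sum_add_distrib, ← sum_add_distrib]
  exact sum_congr rfl fun k _ => by ring

end IterateSmul

end Derivation

namespace MvPolynomial

theorem aeval_mkDerivation {σ R S A : Type*} [CommSemiring R] [CommSemiring S] [CommSemiring A]
    [Algebra R A] [Algebra S A] (D : Derivation S A A) (hD : ∀ r, D (algebraMap R A r) = 0)
    (g : σ → A) (d : σ → MvPolynomial σ R) (hd : ∀ i, aeval g (d i) = D (g i))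
    (q : MvPolynomial σ R) : aeval g (mkDerivation R d q) = D (aeval g q) := by
  induction q using MvPolynomial.induction_on with
  | C r => simp [← algebraMap_eq, hD]
  | add q₁ q₂ h₁ h₂ => simp [h₁, h₂]
  | mul_X q i h => simp [Derivation.leibniz, h, hd, mkDerivation_X]

section Shift

variable (ι R : Type*) [CommSemiring R]

/-- `X (c, i)` plays the role of the `i`-th derivative of the `c`-th generator. -/
noncomputable def shiftDerivation :
    Derivation R (MvPolynomial (ι × ℕ) R) (MvPolynomial (ι × ℕ) R) :=
  mkDerivation R fun ci => X (ci.1, ci.2 + 1)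

variable {ι R}

theorem iterate_shiftDerivation_X (c : ι) (i n : ℕ) :
    (⇑(shiftDerivation ι R))^[n] (X (c, i)) = X (c, i + n) := by
  induction n with
  | zero => rfl
  | succ n ih => rw [Function.iterate_succ_apply', ih, shiftDerivation, mkDerivation_X, add_assoc]

theorem aeval_shiftDerivation {S A : Type*} [CommSemiring S] [CommSemiring A] [Algebra R A]
    [Algebra S A] (D : Derivation S A A) (hD : ∀ r, D (algebraMap R A r) = 0) (f : ι → A)
    (q : MvPolynomial (ι × ℕ) R) :
    aeval (fun ci => (⇑D)^[ci.2] (f ci.1)) (shiftDerivation ι R q) =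
      D (aeval (fun ci => (⇑D)^[ci.2] (f ci.1)) q) :=
  aeval_mkDerivation D hD _ _ (fun ci => by rw [aeval_X, Function.iterate_succ_apply']) q

end Shift

section ShiftRing

variable {ι R : Type*} [CommRing R]

theorem aeval_iterateSmulCoeff_shiftDerivation {S A : Type*} [CommSemiring S] [CommRing A]
    [Algebra R A] [Algebra S A] (D : Derivation S A A) (hD : ∀ r, D (algebraMap R A r) = 0)
    (f : ι → A) (c : ι) (n k : ℕ) :
    aeval (fun ci => (⇑D)^[ci.2] (f ci.1))
        ((shiftDerivation ι R).iterateSmulCoeff (X (c, 0)) n k) =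
      D.iterateSmulCoeff (f c) n k := by
  have h := (shiftDerivation ι R).map_iterateSmulCoeff (X (c, 0)) D
    (aeval fun ci => (⇑D)^[ci.2] (f ci.1)) (aeval_shiftDerivation D hD f) n k
  rwa [aeval_X, Function.iterate_zero_apply] at h

theorem aeval_iterate_shiftDerivation_leibniz_sub {B : Type*} [CommRing B] [Algebra R B]
    {a b : ι} {k : ℕ} (hk : 2 ≤ k) (g : ι × ℕ → B)
    (hga : ∀ i, g (a, i) = if i = 1 then 1 else 0)
    (hgb : ∀ i, g (b, i) = if i = k - 1 then 1 else 0) (j : ℕ) :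
    aeval g ((⇑(shiftDerivation ι R))^[j] (X (a, 0) * X (b, 0)) -
        X (a, 0) * (⇑(shiftDerivation ι R))^[j] (X (b, 0)) -
        (⇑(shiftDerivation ι R))^[j] (X (a, 0)) * X (b, 0)) =
      if j = k then (k : B) else 0 := by
  simp only [Derivation.iterate_leibniz, iterate_shiftDerivation_X, zero_add, map_sub, map_sum,
    map_nsmul, map_mul, aeval_X, hga, hgb]
  have single : ∀ ij : ℕ × ℕ, (ij.1 = 1 ∧ ij.2 = k - 1) ↔ ij = (1, k - 1) := fun ij => by
    rw [Prod.ext_iff]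
  rw [if_neg zero_ne_one, if_neg (by omega : 0 ≠ k - 1), zero_mul, mul_zero, sub_zero, sub_zero]
  simp only [ite_zero_mul_ite_zero, mul_one, single, smul_ite, smul_zero, sum_ite_eq',
    HasAntidiagonal.mem_antidiagonal]
  by_cases hj : j = k
  · rw [if_pos (by omega), if_pos hj, hj, Nat.choose_one_right, nsmul_one]
  · rw [if_neg (by omega), if_neg hj]

end ShiftRing

theorem iterateSmulCoeff_shiftDerivation_eq_zero {p : ℕ} [Fact p.Prime] {k : ℕ} (hk : 2 ≤ k)
    (hkp : k < p) :
    (shiftDerivation (Fin 3) (ZMod p)).iterateSmulCoeff (X (0, 0)) p k = 0 := by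
  let g : Fin 3 × ℕ → MvPolynomial (Fin 3 × ℕ) (ZMod p) := fun ci =>
    ![X ci, if ci.2 = 1 then 1 else 0, if ci.2 = k - 1 then 1 else 0] ci.1
  -- `collapse` commutes with the shift and fixes `X (0, 0)`, hence fixes the coefficients,
  -- and `g` fixes its image.
  let collapse : MvPolynomial (Fin 3 × ℕ) (ZMod p) →ₐ[ZMod p] MvPolynomial (Fin 3 × ℕ) (ZMod p) :=
    aeval fun ci => (⇑(shiftDerivation (Fin 3) (ZMod p)))^[ci.2] (X (0, 0))
  have g_collapse : (aeval g).comp collapse = collapse :=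
    algHom_ext fun ci => by simp [g, collapse, iterate_shiftDerivation_X]
  have g_coeff (j : ℕ) :
      aeval g ((shiftDerivation (Fin 3) (ZMod p)).iterateSmulCoeff (X (0, 0)) p j) =
        (shiftDerivation (Fin 3) (ZMod p)).iterateSmulCoeff (X (0, 0)) p j := by
    rw [← aeval_iterateSmulCoeff_shiftDerivation _ (Derivation.map_algebraMap _)
      (fun _ : Fin 3 => X (0, 0)) 0, ← AlgHom.comp_apply, g_collapse]
  have g_leibniz_sub := aeval_iterate_shiftDerivation_leibniz_sub (R := ZMod p) (a := 1) (b := 2)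
    hk g (fun _ => rfl) (fun _ => rfl)
  have h := congrArg (aeval g) <|
    (shiftDerivation (Fin 3) (ZMod p)).sum_iterateSmulCoeff_mul_leibniz_sub_eq_zero (X (0, 0))
      (p := p) (X (1, 0)) (X (2, 0))
  simp only [map_sum, map_mul, g_coeff, g_leibniz_sub, map_zero, mul_ite, mul_zero,
    sum_ite_eq', mem_range, if_pos (Nat.lt_succ_of_lt hkp)] at h
  refine (mul_eq_zero.1 h).resolve_right ?_
  exact (CharP.cast_eq_zero_iff _ p k).not.2 (Nat.not_dvd_of_pos_of_lt (by omega) hkp)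

end MvPolynomial

namespace Derivation

variable {R A : Type*} [CommSemiring R] [CommRing A] [Algebra R A] {p : ℕ} [Fact p.Prime]
  [CharP A p]

theorem iterateSmulCoeff_prime_eq_zero (D : Derivation R A A) (l : A) {k : ℕ} (hk : 2 ≤ k)
    (hkp : k < p) : D.iterateSmulCoeff l p k = 0 := by
  let _ : Algebra (ZMod p) A := ZMod.algebra A p
  rw [← MvPolynomial.aeval_iterateSmulCoeff_shiftDerivation D (D.map_algebraMap_zmod (p := p))
    (fun _ : Fin 3 => l) 0, MvPolynomial.iterateSmulCoeff_shiftDerivation_eq_zero hk hkp, map_zero]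

theorem iterate_prime_smul_apply (D : Derivation R A A) (l x : A) :
    (⇑(l • D))^[p] x = l ^ p * (⇑D)^[p] x + (⇑(l • D))^[p - 1] l * D x := by
  obtain ⟨n, rfl⟩ := Nat.exists_eq_add_one_of_ne_zero (Fact.out : p.Prime).ne_zero
  rw [D.iterate_smul_apply, sum_range_succ, D.iterateSmulCoeff_self, sum_eq_single 1,
    D.iterateSmulCoeff_succ_one, Nat.add_sub_cancel, Function.iterate_one, add_comm]
  · intro j hj hj1
    rcases Nat.lt_or_ge j 2 with hj2 | hj2
    · rw [show j = 0 by omega, D.iterateSmulCoeff_succ_zero, zero_mul]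
    · rw [D.iterateSmulCoeff_prime_eq_zero l hj2 (mem_range.1 hj), zero_mul]
  · exact fun h1 => absurd (mem_range.2 (Fact.out : (n + 1).Prime).one_lt) h1

end Derivation

/-- Hochschild's formula: `(λD)^{∘p} = λ^p D^{∘p} + ((λD)^{∘(p-1)}(λ)) • D`. -/
theorem stmt2 (p : ℕ) [Fact p.Prime] (K F : Type*) [Field K] [Field F] [Algebra K F]
    [CharP F p] (D : Derivation K F F) (l : F) :
    ∀ x : F, (⇑(l • D))^[p] x = l ^ p * (⇑D)^[p] x + ((⇑(l • D))^[p - 1] l) * D x :=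
  D.iterate_prime_smul_apply l
end

section
/- Let F/K be an algebraic purely inseparable field extension of characteristic p > 0, and let R be a commutative K-algebra. If R is a local ring, then F ⊗_K R is a local ring. -/
open scoped TensorProduct

/-!
In exponential characteristic `q`, every element of `F ⊗[K] R` has a `q ^ n`-th power in `R`:
this holds for pure tensors because `F / K` is purely inseparable, and it is preserved by sums
because `x ↦ x ^ q ^ n` is additive. So `R → F ⊗[K] R` is `q`-radical, and a `q`-radical
extension of a local ring is local, since `x` (resp. `1 - x`) is a unit as soon as
`x ^ q ^ n` (resp. `(1 - x) ^ q ^ n = 1 - x ^ q ^ n`) is.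
-/

theorem IsPRadical.nontrivial {R S : Type*} [CommSemiring R] [CommSemiring S] [Nontrivial R]
    (f : R →+* S) (p : ℕ) [IsPRadical f p] : Nontrivial S := by
  by_contra h
  rw [not_nontrivial_iff_subsingleton] at h
  obtain ⟨n, hn⟩ := mem_pNilradical.1 <| IsPRadical.ker_le f p (Subsingleton.elim (f 1) 0)
  simp at hn

theorem IsLocalRing.of_isPRadical {R S : Type*} [CommRing R] [CommRing S] [IsLocalRing R]
    (f : R →+* S) (p : ℕ) [ExpChar S p] [IsPRadical f p] : IsLocalRing S := by
  have := IsPRadical.nontrivial f p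
  refine .of_isUnit_or_isUnit_one_sub_self fun x ↦ ?_
  obtain ⟨n, y, hy⟩ := IsPRadical.pow_mem f p x
  have hpn : p ^ n ≠ 0 := (expChar_pow_pos S p n).ne'
  refine (isUnit_or_isUnit_one_sub_self y).imp (fun h ↦ ?_) (fun h ↦ ?_)
  · rw [← isUnit_pow_iff hpn, ← hy]
    exact h.map f
  · rw [← isUnit_pow_iff hpn, sub_pow_expChar_pow, one_pow, ← hy, ← map_one f, ← map_sub]
    exact h.map f

theorem Subring.exists_add_pow_expChar_pow_mem {S : Type*} [CommRing S] (T : Subring S)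
    (q : ℕ) [ExpChar S q] {x y : S} (hx : ∃ n : ℕ, x ^ q ^ n ∈ T) (hy : ∃ n : ℕ, y ^ q ^ n ∈ T) :
    ∃ n : ℕ, (x + y) ^ q ^ n ∈ T := by
  obtain ⟨m, hm⟩ := hx
  obtain ⟨n, hn⟩ := hy
  refine ⟨m + n, ?_⟩
  rw [add_pow_expChar_pow, pow_add, pow_mul, pow_mul']
  exact T.add_mem (T.pow_mem hm _) (T.pow_mem hn _)

namespace Algebra.TensorProduct

theorem exists_pow_expChar_pow_mem_range_includeRight {K A B : Type*} [CommRing K] [CommRing A]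
    [Algebra K A] [CommRing B] [Algebra K B] (q : ℕ) [ExpChar (A ⊗[K] B) q]
    (hA : ∀ a : A, ∃ n : ℕ, a ^ q ^ n ∈ (algebraMap K A).range) (x : A ⊗[K] B) :
    ∃ n : ℕ, x ^ q ^ n ∈ (includeRight : B →ₐ[K] A ⊗[K] B).toRingHom.range := by
  induction x using TensorProduct.induction_on with
  | zero => exact ⟨0, 0, by simp⟩
  | tmul a b =>
    obtain ⟨n, c, hc⟩ := hA a
    refine ⟨n, c • b ^ q ^ n, ?_⟩
    rw [tmul_pow, ← hc, AlgHom.toRingHom_eq_coe, RingHom.coe_coe, includeRight_apply,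
      Algebra.algebraMap_eq_smul_one, TensorProduct.smul_tmul]
  | add x y hx hy => exact Subring.exists_add_pow_expChar_pow_mem _ q hx hy

theorem isPRadical_includeRight (K F R : Type*) [Field K] [Field F] [Algebra K F]
    [IsPurelyInseparable K F] [CommRing R] [Algebra K R] [Nontrivial R] (q : ℕ) [ExpChar K q] :
    IsPRadical (includeRight : R →ₐ[K] F ⊗[K] R).toRingHom q := by
  have : ExpChar (F ⊗[K] R) q := expChar_of_injective_algebraMap (algebraMap K _).injective q
  refine ⟨fun x ↦ ?_, ?_⟩
  · obtain ⟨n, y, hy⟩ := exists_pow_expChar_pow_mem_range_includeRight q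
      (fun a ↦ IsPurelyInseparable.pow_mem K q a) x
    exact ⟨n, y, hy⟩
  · have hinj := includeRight_injective (A := F) (B := R) (algebraMap K F).injective
    intro x hx
    rw [hinj (hx.trans (map_zero _).symm)]
    exact zero_mem _

end Algebra.TensorProduct

theorem stmt4_general (K F : Type*) [Field K] [Field F] [Algebra K F]
    [IsPurelyInseparable K F]
    (R : Type*) [CommRing R] [Algebra K R] [IsLocalRing R] :
    IsLocalRing (F ⊗[K] R) := by
  have := Algebra.TensorProduct.isPRadical_includeRight K F R (ringExpChar K)
  have : ExpChar (F ⊗[K] R) (ringExpChar K) :=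
    expChar_of_injective_algebraMap (algebraMap K _).injective _
  exact .of_isPRadical Algebra.TensorProduct.includeRight.toRingHom (ringExpChar K)

/-- If `F/K` is an algebraic purely inseparable extension and `R` is a local
commutative `K`-algebra, then `F ⊗_K R` is local. -/
theorem stmt4 (p : ℕ) [Fact p.Prime] (K F : Type*) [Field K] [Field F] [Algebra K F]
    [CharP K p] [Algebra.IsAlgebraic K F] [IsPurelyInseparable K F]
    (R : Type*) [CommRing R] [Algebra K R] [IsLocalRing R] :
    IsLocalRing (F ⊗[K] R) :=
  stmt4_general K F R
end

section
/- Let f : A → B be a surjective homomorphism of commutative rings whose kernel I is generated by a regular sequence. Then the conormal module I/I² is a free B-module of rank equal to the length of the regular sequence. -/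
/-!
Let `I = (v₁, …, vₙ)`. The classes of the `vᵢ` always span `I/I²`, and they are linearly
independent over `A/I` exactly when every syzygy `∑ cᵢ vᵢ ∈ I²` has all `cᵢ ∈ I`. Writing an
element of `I²` as `∑ bᵢ vᵢ` with `bᵢ ∈ I` reduces this to genuine syzygies `∑ cᵢ vᵢ = 0`, and
for a regular sequence their coefficients lie in `I` by induction on `n`: `vₙ` is a
nonzerodivisor modulo `(v₁, …, vₙ₋₁)`, so `cₙ ∈ (v₁, …, vₙ₋₁)`, and absorbing `cₙ vₙ` into the
other terms leaves a syzygy of `v₁, …, vₙ₋₁`.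
-/

open Ideal RingTheory.Sequence

theorem Submodule.mem_span_range_smul_top_iff {R M ι : Type*} [CommSemiring R] [AddCommMonoid M]
    [Module R M] [Fintype ι] {v : ι → R} {x : M} :
    x ∈ Ideal.span (Set.range v) • (⊤ : Submodule R M) ↔ ∃ d : ι → M, ∑ i, v i • d i = x := by
  constructor
  · intro hx
    refine Submodule.smul_induction_on hx (fun r hr m _ => ?_) fun x y ⟨d, hd⟩ ⟨e, he⟩ => ?_
    · obtain ⟨c, rfl⟩ := Ideal.mem_span_range_iff_exists_fun.mp hr
      exact ⟨fun i => c i • m, by simp only [Finset.sum_smul, smul_smul, mul_comm]⟩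
    · exact ⟨d + e, by simp only [Pi.add_apply, smul_add, Finset.sum_add_distrib, hd, he]⟩
  · rintro ⟨d, rfl⟩
    exact sum_mem fun i _ => Submodule.smul_mem_smul (subset_span ⟨i, rfl⟩) trivial

theorem Ideal.ofList_ofFn {R : Type*} [Semiring R] {n : ℕ} (v : Fin n → R) :
    ofList (List.ofFn v) = Ideal.span (Set.range v) := by
  simp only [ofList, List.mem_ofFn]
  rfl

theorem RingTheory.Sequence.IsWeaklyRegular.mem_span_smul_top_of_sum_smul_eq_zero
    {R M : Type*} [CommRing R] [AddCommGroup M] [Module R M] {n : ℕ} {v : Fin n → R}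
    (hv : IsWeaklyRegular M (List.ofFn v)) {m : Fin n → M} (hm : ∑ i, v i • m i = 0)
    (i : Fin n) : m i ∈ Ideal.span (Set.range v) • (⊤ : Submodule R M) := by
  induction n with
  | zero => exact i.elim0
  | succ n ih =>
    set w : Fin n → R := fun j => v j.castSucc
    set r := v (Fin.last n)
    rw [List.ofFn_succ', List.concat_eq_append, isWeaklyRegular_append_iff,
      isWeaklyRegular_singleton_iff, ofList_ofFn] at hv
    obtain ⟨hw, hr⟩ := hv
    rw [Fin.sum_univ_castSucc] at hm
    have hmono : Ideal.span (Set.range w) • (⊤ : Submodule R M) ≤ Ideal.span (Set.range v) • ⊤ :=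
      Submodule.smul_mono_left (Ideal.span_mono (Set.range_comp_subset_range Fin.castSucc v))
    have hmlast : m (Fin.last n) ∈ Ideal.span (Set.range w) • (⊤ : Submodule R M) := by
      refine mem_of_isSMulRegular_quotient_of_smul_mem hr ?_
      rw [eq_neg_of_add_eq_zero_right hm]
      exact neg_mem (Submodule.mem_span_range_smul_top_iff.mpr ⟨_, rfl⟩)
    obtain ⟨d, hd⟩ := Submodule.mem_span_range_smul_top_iff.mp hmlast
    refine Fin.lastCases (hmono hmlast) (fun j => ?_) i
    have hsyz : ∑ j, w j • (m j.castSucc + r • d j) = 0 := by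
      simp only [smul_add, Finset.sum_add_distrib, smul_comm (w _) r, ← Finset.smul_sum, hd]
      exact hm
    have hrd : r • d j ∈ Ideal.span (Set.range v) • (⊤ : Submodule R M) :=
      Submodule.smul_mem_smul (Ideal.subset_span (Set.mem_range_self _)) Submodule.mem_top
    simpa using sub_mem (hmono (ih hw hsyz j)) hrd

namespace Ideal

variable {R ι : Type*} [CommRing R] [Fintype ι] {I : Ideal R} {v : ι → R}

theorem sum_smul_toCotangent (hv : ∀ i, v i ∈ I) (c : ι → R) :
    ∑ i, c i • I.toCotangent ⟨v i, hv i⟩ =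
      I.toCotangent ⟨∑ i, c i * v i, I.sum_mem fun i _ => I.mul_mem_left _ (hv i)⟩ := by
  simp only [← map_smul, ← map_sum]
  congr 1
  ext
  simp

theorem top_le_span_range_toCotangent (hv : ∀ i, v i ∈ I) (hI : I ≤ span (Set.range v)) :
    ⊤ ≤ Submodule.span (R ⧸ I) (Set.range fun i => I.toCotangent ⟨v i, hv i⟩) := by
  rintro x -
  obtain ⟨⟨a, ha⟩, rfl⟩ := I.toCotangent_surjective x
  obtain ⟨c, rfl⟩ := mem_span_range_iff_exists_fun.mp (hI ha)
  rw [← sum_smul_toCotangent hv]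
  exact Submodule.sum_mem _ fun i _ =>
    Submodule.smul_of_tower_mem _ (c i) (Submodule.subset_span (Set.mem_range_self i))

theorem linearIndependent_toCotangent (hv : ∀ i, v i ∈ I) (hI : I = span (Set.range v))
    (hsyz : ∀ c : ι → R, ∑ i, c i * v i = 0 → ∀ i, c i ∈ I) :
    LinearIndependent (R ⧸ I) fun i => I.toCotangent ⟨v i, hv i⟩ := by
  rw [Fintype.linearIndependent_iff]
  intro g hg i
  choose c hc using fun i => Quotient.mk_surjective (g i)
  obtain rfl : (fun i => Quotient.mk I (c i)) = g := funext hc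
  change ∑ i, c i • I.toCotangent ⟨v i, hv i⟩ = 0 at hg
  rw [sum_smul_toCotangent hv, toCotangent_eq_zero, pow_two] at hg
  nth_rw 2 [hI] at hg
  obtain ⟨b, hbI, hb⟩ := (Submodule.mem_ideal_smul_span_iff_exists_sum I v _).mp hg
  replace hb : ∑ i, b i * v i = ∑ i, c i * v i := by
    rwa [Finsupp.sum_fintype _ _ fun i => zero_smul R (v i)] at hb
  have hdiff : ∑ i, (c i - b i) * v i = 0 := by
    simp only [sub_mul, Finset.sum_sub_distrib, hb, sub_self]
  simpa [Quotient.eq_zero_iff_mem] using add_mem (hsyz _ hdiff i) (hbI i)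

noncomputable def cotangentBasisOfSyzygies (hI : I = span (Set.range v))
    (hsyz : ∀ c : ι → R, ∑ i, c i * v i = 0 → ∀ i, c i ∈ I) :
    Module.Basis ι (R ⧸ I) I.Cotangent :=
  have hv : ∀ i, v i ∈ I := fun i => hI ▸ subset_span ⟨i, rfl⟩
  .mk (linearIndependent_toCotangent hv hI hsyz) (top_le_span_range_toCotangent hv hI.le)

end Ideal

noncomputable def RingTheory.Sequence.IsWeaklyRegular.cotangentBasis {R : Type*} [CommRing R]
    {rs : List R} (hrs : IsWeaklyRegular R rs) {I : Ideal R} (hI : I = ofList rs) :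
    Module.Basis (Fin rs.length) (R ⧸ I) I.Cotangent :=
  have hI' : I = span (Set.range rs.get) := by
    rw [hI, ← ofList_ofFn, List.ofFn_get]
  have hrs' : IsWeaklyRegular R (List.ofFn rs.get) := by rwa [List.ofFn_get]
  cotangentBasisOfSyzygies hI' fun c hc i => by
    have hc' : ∑ i, rs.get i • c i = 0 := by simpa [mul_comm] using hc
    simpa [hI] using hrs'.mem_span_smul_top_of_sum_smul_eq_zero hc' i

/-- If `f : A → B` is a surjection of commutative rings whose kernel `I` is generated by
a regular sequence, then the conormal module `I/I²` is free over `B` of rank the length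
of the regular sequence. -/
theorem stmt8 (A B : Type*) [CommRing A] [CommRing B] (f : A →+* B)
    (hf : Function.Surjective f) (rs : List A)
    (hreg : RingTheory.Sequence.IsRegular A rs)
    (hker : RingHom.ker f = Ideal.ofList rs) :
    letI : Module B (RingHom.ker f).Cotangent :=
      Module.compHom _ (RingHom.quotientKerEquivOfSurjective hf).symm.toRingHom
    Module.Free B (RingHom.ker f).Cotangent ∧
      Module.rank B (RingHom.ker f).Cotangent = rs.length := by
  let : Module B (RingHom.ker f).Cotangent :=
    Module.compHom _ (RingHom.quotientKerEquivOfSurjective hf).symm.toRingHom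
  let e := RingHom.quotientKerEquivOfSurjective hf
  let b := (hreg.toIsWeaklyRegular.cotangentBasis hker).mapCoeffs e fun c x => by
    change e.symm (e c) • x = c • x
    rw [e.symm_apply_apply]
  have hker_ne_top : RingHom.ker f ≠ ⊤ := by
    simpa [hker, eq_comm] using hreg.top_ne_smul
  have : Nontrivial (A ⧸ RingHom.ker f) := Quotient.nontrivial_iff.mpr hker_ne_top
  have : Nontrivial B := e.symm.toEquiv.nontrivial
  exact ⟨.of_basis b, by simpa using rank_eq_card_basis b⟩
end

section
/- Let F/K be a finite field extension generated by elements x₁, …, x_n. Define polynomials P₁, …, P_n ∈ K[X₁, …, X_n] inductively so that P_i ∈ K[X₁, …, X_i] is monic in X_i and maps to the minimal polynomial of x_i over the subfield K(x₁, …, x_{i-1}). Then P₁, …, P_n form a regular sequence generating the kernel of the evaluation map K[X₁, …, X_n] → F, X_i ↦ x_i. -/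
/-!
Write `K_i = K(x_j : j < i)` (`prefixField`) and let `φ_i : K[X] → K_i[X_j : j ≥ i]`
(`evalPrefix`) substitute `x_j` for `X_j` when `j < i`. Each `φ_i` is surjective, and `φ_{i+1}`
is `φ_i` followed by the evaluation `X_i ↦ x_i`, whose kernel is generated by the minimal
polynomial of `x_i` over `K_i`, that is by `φ_i(P_i)`. Hence `ker φ_{i+1} = (P_i) + ker φ_i`, and
by induction `ker φ_i = (P_j : j < i)`. As `K_i[X_j : j ≥ i]` is a domain and `φ_i(P_i) ≠ 0`,
`P_i` is a nonzerodivisor modulo `(P_j : j < i)`. Finally `φ_n` is the evaluation at `x`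
followed by the inclusion `K_n ⊆ F`.
-/

open MvPolynomial IntermediateField

theorem MvPolynomial.map_aeval_supported {σ R S : Type*} [CommSemiring R] [CommSemiring S]
    [Algebra R S] (x : σ → S) (s : Set σ) :
    (supported R s).map (aeval x) = Algebra.adjoin R (x '' s) := by
  rw [supported_eq_adjoin_X, ← Algebra.adjoin_image, Set.image_image]
  simp

section

variable {R S T : Type*} [CommRing R] [CommRing S] [CommRing T]

theorem RingHom.ker_comp_of_ker_eq_span_singleton {φ : R →+* S} (hφ : Function.Surjective φ)
    {ψ : S →+* T} {p : R} (hψ : RingHom.ker ψ = Ideal.span {φ p}) :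
    RingHom.ker (ψ.comp φ) = Ideal.span {p} ⊔ RingHom.ker φ := by
  rw [← RingHom.comap_ker, hψ, ← Set.image_singleton, ← Ideal.map_span,
    Ideal.comap_map_of_surjective _ hφ, ← RingHom.ker_eq_comap_bot]

theorem RingHom.isSMulRegular_quotient_ker [IsDomain S] {φ : R →+* S} {r : R} (hr : φ r ≠ 0) :
    IsSMulRegular (R ⧸ (RingHom.ker φ • ⊤ : Submodule R R)) r := by
  rw [smul_eq_mul, Ideal.mul_top, isSMulRegular_iff_right_eq_zero_of_smul]
  intro a h
  obtain ⟨a, rfl⟩ := Submodule.Quotient.mk_surjective _ a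
  rw [← Submodule.Quotient.mk_smul, Submodule.Quotient.mk_eq_zero, RingHom.mem_ker,
    smul_eq_mul, map_mul] at h
  exact (Submodule.Quotient.mk_eq_zero _).mpr ((mul_eq_zero.mp h).resolve_left hr)

theorem Ideal.ofList_take_ofFn {n : ℕ} (f : Fin n → R) (i : ℕ) :
    Ideal.ofList ((List.ofFn f).take i) = Ideal.span (f '' {j | (j : ℕ) < i}) := by
  rw [Ideal.ofList]
  congr 1
  ext r
  simp only [List.mem_take_iff_getElem, List.getElem_ofFn, List.length_ofFn, lt_inf_iff,
    Set.mem_ofPred_eq, Set.mem_image]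
  constructor
  · rintro ⟨k, hk, rfl⟩
    exact ⟨⟨k, hk.2⟩, hk.1, rfl⟩
  · rintro ⟨j, hj, rfl⟩
    exact ⟨j, ⟨hj, j.2⟩, rfl⟩

theorem RingTheory.Sequence.isRegular_ofFn_of_ker_eq_span {n : ℕ} {P : Fin n → R}
    {B : Fin n → Type*} [∀ i, CommRing (B i)] [∀ i, IsDomain (B i)] (φ : ∀ i, R →+* B i)
    (hker : ∀ i, RingHom.ker (φ i) = Ideal.span (P '' {j | j < i}))
    (hP : ∀ i, φ i (P i) ≠ 0) (htop : Ideal.span (Set.range P) ≠ ⊤) :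
    RingTheory.Sequence.IsRegular R (List.ofFn P) := by
  refine ⟨⟨fun i hi => ?_⟩, ?_⟩
  · rw [List.length_ofFn] at hi
    rw [Ideal.ofList_take_ofFn, List.getElem_ofFn]
    have hreg := RingHom.isSMulRegular_quotient_ker (hP ⟨i, hi⟩)
    rw [hker] at hreg
    exact hreg
  · rw [smul_eq_mul, Ideal.mul_top, ← List.take_length (l := List.ofFn P), Ideal.ofList_take_ofFn]
    simpa [List.length_ofFn] using htop.symm

end

noncomputable section

variable {n i : ℕ} (hi : i < n)

def varsEquivOption : {j : Fin n // i ≤ (j : ℕ)} ≃ Option {j : Fin n // i + 1 ≤ (j : ℕ)} where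
  toFun j := if h : i + 1 ≤ (j : ℕ) then some ⟨j, h⟩ else none
  invFun o := o.elim ⟨⟨i, hi⟩, le_rfl⟩ fun j => ⟨j, Nat.le_of_succ_le j.2⟩
  left_inv j := by
    by_cases h : i + 1 ≤ (j : ℕ)
    · simp [h]
    · simp only [h, dite_false, Option.elim]
      exact Subtype.ext (Fin.ext (le_antisymm j.2 (Nat.lt_succ_iff.mp (not_le.mp h))))
  right_inv o := by
    cases o with
    | none => simp
    | some j => simp [j.2]

theorem varsEquivOption_self : varsEquivOption hi ⟨⟨i, hi⟩, le_rfl⟩ = none := by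
  simp [varsEquivOption]

theorem varsEquivOption_of_succ_le {j : Fin n} (h : i + 1 ≤ (j : ℕ)) :
    varsEquivOption hi ⟨j, Nat.le_of_succ_le h⟩ = some ⟨j, h⟩ := by
  simp [varsEquivOption, Nat.lt_of_succ_le h]

variable (R : Type*) [CommSemiring R]

def isolateVar :
    MvPolynomial {j : Fin n // i ≤ (j : ℕ)} R ≃ₐ[R]
      MvPolynomial {j : Fin n // i + 1 ≤ (j : ℕ)} (Polynomial R) :=
  (renameEquiv R (varsEquivOption hi)).trans (optionEquivRight R _)

variable {R}

@[simp]
theorem isolateVar_C (r : R) : isolateVar hi R (C r) = C (Polynomial.C r) := by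
  simp [isolateVar]

@[simp]
theorem isolateVar_X_self : isolateVar hi R (X ⟨⟨i, hi⟩, le_rfl⟩) = C Polynomial.X := by
  simp [isolateVar, varsEquivOption_self]

theorem isolateVar_X_of_succ_le {j : Fin n} (h : i + 1 ≤ (j : ℕ)) :
    isolateVar hi R (X ⟨j, Nat.le_of_succ_le h⟩) = X ⟨j, h⟩ := by
  simp [isolateVar, varsEquivOption_of_succ_le hi h]

end

noncomputable section

variable (K : Type*) {F : Type*} [Field K] [Field F] [Algebra K F] {n : ℕ} (x : Fin n → F)

def prefixField (i : ℕ) : IntermediateField K F :=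
  adjoin K (x '' {j : Fin n | (j : ℕ) < i})

variable {K x} in
theorem mem_prefixField {i : ℕ} {j : Fin n} (h : (j : ℕ) < i) : x j ∈ prefixField K x i :=
  subset_adjoin _ _ ⟨j, h, rfl⟩

theorem prefixField_mono {i i' : ℕ} (h : i ≤ i') : prefixField K x i ≤ prefixField K x i' :=
  adjoin.mono _ _ _ (Set.image_mono fun _ hj => lt_of_lt_of_le hj h)

def evalPrefix (i : ℕ) :
    MvPolynomial (Fin n) K →+* MvPolynomial {j : Fin n // i ≤ (j : ℕ)} (prefixField K x i) :=
  eval₂Hom (C.comp (algebraMap K _)) fun j =>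
    if h : i ≤ (j : ℕ) then X ⟨j, h⟩ else C ⟨x j, mem_prefixField (not_le.mp h)⟩

variable {i : ℕ}

@[simp]
theorem evalPrefix_C (r : K) : evalPrefix K x i (C r) = C (algebraMap K _ r) :=
  eval₂Hom_C _ _ _

theorem evalPrefix_X_of_le {j : Fin n} (h : i ≤ (j : ℕ)) : evalPrefix K x i (X j) = X ⟨j, h⟩ := by
  simp [evalPrefix, h]

theorem evalPrefix_X_of_lt {j : Fin n} (h : (j : ℕ) < i) :
    evalPrefix K x i (X j) = C ⟨x j, mem_prefixField h⟩ := by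
  simp [evalPrefix, not_le.mpr h]

theorem aeval_mem_prefixField {p : MvPolynomial (Fin n) K}
    (hp : p ∈ supported K {j : Fin n | (j : ℕ) < i}) : aeval x p ∈ prefixField K x i := by
  refine algebra_adjoin_le_adjoin K _ ?_
  rw [← map_aeval_supported]
  exact Subalgebra.mem_map.mpr ⟨p, hp, rfl⟩

theorem evalPrefix_of_mem_supported {p : MvPolynomial (Fin n) K}
    (hp : p ∈ supported K {j : Fin n | (j : ℕ) < i}) :
    evalPrefix K x i p = C ⟨aeval x p, aeval_mem_prefixField K x hp⟩ := by
  induction hp using Algebra.adjoin_induction with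
  | mem p hp =>
    obtain ⟨j, hj, rfl⟩ := hp
    simp [evalPrefix_X_of_lt K x hj]
  | algebraMap r => simp [algebraMap_eq]
  | add p q hp hq ihp ihq =>
    rw [map_add, ihp, ihq, ← map_add]
    exact congrArg C (Subtype.ext (map_add _ _ _).symm)
  | mul p q hp hq ihp ihq =>
    rw [map_mul, ihp, ihq, ← map_mul]
    exact congrArg C (Subtype.ext (map_mul _ _ _).symm)

theorem exists_mem_supported_aeval_eq [Algebra.IsAlgebraic K F] {y : F}
    (hy : y ∈ prefixField K x i) :
    ∃ p ∈ supported K {j : Fin n | (j : ℕ) < i}, aeval x p = y := by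
  rwa [← mem_toSubalgebra, prefixField,
    adjoin_toSubalgebra_of_isAlgebraic fun y _ => Algebra.IsAlgebraic.isAlgebraic y,
    ← map_aeval_supported, Subalgebra.mem_map] at hy

theorem evalPrefix_surjective [Algebra.IsAlgebraic K F] (i : ℕ) :
    Function.Surjective (evalPrefix K x i) := by
  intro f
  induction f using MvPolynomial.induction_on with
  | C z =>
    obtain ⟨p, hp, hpz⟩ := exists_mem_supported_aeval_eq K x z.2
    exact ⟨p, by rw [evalPrefix_of_mem_supported K x hp]; simp only [hpz]⟩
  | add f g hf hg =>
    obtain ⟨a, rfl⟩ := hf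
    obtain ⟨b, rfl⟩ := hg
    exact ⟨a + b, map_add _ _ _⟩
  | mul_X f j hf =>
    obtain ⟨a, rfl⟩ := hf
    exact ⟨a * X j.1, by rw [map_mul, evalPrefix_X_of_le K x j.2]⟩

theorem evalPrefix_zero_injective : Function.Injective (evalPrefix K x 0) := by
  have : evalPrefix K x 0 =
      (rename fun j => ⟨j, Nat.zero_le _⟩).toRingHom.comp (map (algebraMap K _)) := by
    apply ringHom_ext
    · simp
    · intro j
      simp [evalPrefix_X_of_le K x (Nat.zero_le j)]
  rw [this]
  exact (rename_injective _ fun _ _ h => congrArg Subtype.val h).comp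
    (map_injective _ (algebraMap K _).injective)

theorem aeval_evalPrefix (i : ℕ) (p : MvPolynomial (Fin n) K) :
    aeval (fun j : {j : Fin n // i ≤ (j : ℕ)} => x j) (evalPrefix K x i p) = aeval x p := by
  change ((aeval _).toRingHom.comp (evalPrefix K x i)) p = (aeval x).toRingHom p
  congr 1
  apply ringHom_ext
  · intro r
    simp [IntermediateField.algebraMap_apply]
  · intro j
    by_cases h : i ≤ (j : ℕ)
    · simp [evalPrefix_X_of_le K x h]
    · simp [evalPrefix_X_of_lt K x (not_le.mp h)]

theorem ker_aeval_eq_ker_evalPrefix :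
    RingHom.ker (aeval x : MvPolynomial (Fin n) K →ₐ[K] F).toRingHom =
      RingHom.ker (evalPrefix K x n) := by
  have : IsEmpty {j : Fin n // n ≤ (j : ℕ)} := ⟨fun j => j.2.not_gt j.1.2⟩
  ext p
  rw [RingHom.mem_ker, RingHom.mem_ker, AlgHom.toRingHom_eq_coe, RingHom.coe_coe,
    ← aeval_evalPrefix, map_eq_zero_iff _ (aeval_injective_iff_of_isEmpty.mpr
      (algebraMap (prefixField K x n) F).injective)]

def evalVar (hi : i < n) : Polynomial (prefixField K x i) →+* prefixField K x (i + 1) :=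
  Polynomial.eval₂RingHom (inclusion (prefixField_mono K x i.le_succ)).toRingHom
    ⟨x ⟨i, hi⟩, mem_prefixField (Nat.lt_succ_self i)⟩

theorem evalVar_C (hi : i < n) (a : prefixField K x i) :
    evalVar K x hi (Polynomial.C a) = inclusion (prefixField_mono K x i.le_succ) a :=
  Polynomial.eval₂_C _ _

theorem evalVar_X (hi : i < n) :
    evalVar K x hi Polynomial.X = ⟨x ⟨i, hi⟩, mem_prefixField (Nat.lt_succ_self i)⟩ :=
  Polynomial.eval₂_X _ _

theorem coe_evalVar (hi : i < n) (p : Polynomial (prefixField K x i)) :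
    (evalVar K x hi p : F) = Polynomial.aeval (x ⟨i, hi⟩) p := by
  induction p using Polynomial.induction_on' with
  | add p q hp hq => rw [map_add, AddMemClass.coe_add, hp, hq, map_add]
  | monomial k a =>
    rw [← Polynomial.C_mul_X_pow_eq_monomial, map_mul, map_pow, evalVar_C, evalVar_X,
      MulMemClass.coe_mul, SubmonoidClass.coe_pow, coe_inclusion, map_mul, map_pow,
      Polynomial.aeval_C, Polynomial.aeval_X]
    rfl

theorem ker_evalVar (hi : i < n) :
    RingHom.ker (evalVar K x hi) = Ideal.span {minpoly (prefixField K x i) (x ⟨i, hi⟩)} := by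
  ext p
  rw [RingHom.mem_ker, ← Subtype.coe_inj, ZeroMemClass.coe_zero, coe_evalVar,
    ← RingHom.mem_ker, minpoly.ker_aeval_eq_span_minpoly, Ideal.submodule_span_eq]

def evalNext (hi : i < n) :
    MvPolynomial {j : Fin n // i ≤ (j : ℕ)} (prefixField K x i) →+*
      MvPolynomial {j : Fin n // i + 1 ≤ (j : ℕ)} (prefixField K x (i + 1)) :=
  (map (evalVar K x hi)).comp (isolateVar hi _).toRingEquiv.toRingHom

theorem evalNext_C (hi : i < n) (a : prefixField K x i) :
    evalNext K x hi (C a) = C (inclusion (prefixField_mono K x i.le_succ) a) := by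
  rw [evalNext, RingHom.comp_apply, RingEquiv.toRingHom_eq_coe, RingEquiv.coe_toRingHom,
    AlgEquiv.coe_ringEquiv, isolateVar_C, map_C, evalVar_C]

theorem evalNext_X_self (hi : i < n) :
    evalNext K x hi (X ⟨⟨i, hi⟩, le_rfl⟩) =
      C ⟨x ⟨i, hi⟩, mem_prefixField (Nat.lt_succ_self i)⟩ := by
  rw [evalNext, RingHom.comp_apply, RingEquiv.toRingHom_eq_coe, RingEquiv.coe_toRingHom,
    AlgEquiv.coe_ringEquiv, isolateVar_X_self, map_C, evalVar_X]

theorem evalNext_X_of_succ_le (hi : i < n) {j : Fin n} (h : i + 1 ≤ (j : ℕ)) :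
    evalNext K x hi (X ⟨j, Nat.le_of_succ_le h⟩) = X ⟨j, h⟩ := by
  rw [evalNext, RingHom.comp_apply, RingEquiv.toRingHom_eq_coe, RingEquiv.coe_toRingHom,
    AlgEquiv.coe_ringEquiv, isolateVar_X_of_succ_le hi h, map_X]

theorem evalNext_comp_evalPrefix (hi : i < n) :
    (evalNext K x hi).comp (evalPrefix K x i) = evalPrefix K x (i + 1) := by
  apply ringHom_ext
  · intro r
    rw [RingHom.comp_apply, evalPrefix_C, evalNext_C, AlgHom.commutes, evalPrefix_C]
  · intro j
    rcases lt_trichotomy (j : ℕ) i with h | rfl | h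
    · rw [RingHom.comp_apply, evalPrefix_X_of_lt K x h, evalNext_C,
        evalPrefix_X_of_lt K x (h.trans i.lt_succ_self)]
      exact congrArg C (Subtype.ext (coe_inclusion _ _))
    · rw [RingHom.comp_apply, evalPrefix_X_of_le K x le_rfl, evalNext_X_self,
        evalPrefix_X_of_lt K x (Nat.lt_succ_self _)]
    · rw [RingHom.comp_apply, evalPrefix_X_of_le K x h.le, evalNext_X_of_succ_le K x hi h,
        evalPrefix_X_of_le K x h]

theorem ker_evalNext (hi : i < n) :
    RingHom.ker (evalNext K x hi) =
      Ideal.span {(isolateVar hi _).symm (C (minpoly (prefixField K x i) (x ⟨i, hi⟩)))} := by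
  rw [evalNext, ← RingHom.comap_ker, ker_map, ker_evalVar, Ideal.map_span, Set.image_singleton]
  change Ideal.comap (isolateVar hi _).toRingEquiv _ = _
  rw [← Ideal.map_symm, Ideal.map_span, Set.image_singleton]
  rfl

/-- `q` is `p` written as a polynomial in `X i` with coefficients in `K[X_j : j < i]`. -/
def IsMinpolyLift (i : Fin n) (p : MvPolynomial (Fin n) K) : Prop :=
  ∃ q : Polynomial (MvPolynomial (Fin n) K),
    (∀ k, q.coeff k ∈ supported K {j : Fin n | j < i}) ∧ p = Polynomial.aeval (X i) q ∧
      q.map (aeval x : MvPolynomial (Fin n) K →ₐ[K] F).toRingHom =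
        (minpoly (prefixField K x i) (x i)).map (algebraMap (prefixField K x i) F)

variable {K x}

theorem IsMinpolyLift.isolateVar_evalPrefix {p : MvPolynomial (Fin n) K} (hi : i < n)
    (hp : IsMinpolyLift K x ⟨i, hi⟩ p) :
    isolateVar hi _ (evalPrefix K x i p) = C (minpoly (prefixField K x i) (x ⟨i, hi⟩)) := by
  obtain ⟨q, hq, rfl, hmap⟩ := hp
  set W : MvPolynomial {j : Fin n // i + 1 ≤ (j : ℕ)} (Polynomial (prefixField K x i)) →+*
      MvPolynomial {j : Fin n // i + 1 ≤ (j : ℕ)} (Polynomial F) :=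
    map (Polynomial.mapRingHom (algebraMap (prefixField K x i) F))
  have hW : Function.Injective W :=
    map_injective _ (Polynomial.map_injective _ (algebraMap (prefixField K x i) F).injective)
  set Z := W.comp ((isolateVar hi _).toRingEquiv.toRingHom.comp (evalPrefix K x i))
  have hZ_coeff (k : ℕ) : Z (q.coeff k) = C (Polynomial.C (aeval x (q.coeff k))) := by
    simp [Z, W, evalPrefix_of_mem_supported K x (hq k)]
  have hZ_X : Z (X ⟨i, hi⟩) = C Polynomial.X := by
    simp [Z, W, evalPrefix_X_of_le K x (j := ⟨i, hi⟩) le_rfl]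
  -- once the coefficients are pushed into `F`, both sides are `q.map (aeval x)`
  apply hW
  calc W (isolateVar hi _ (evalPrefix K x i (Polynomial.aeval (X ⟨i, hi⟩) q)))
      = q.eval₂ Z (C Polynomial.X) := by
        rw [Polynomial.aeval_def, Algebra.algebraMap_self, ← hZ_X]
        exact (Polynomial.hom_eval₂ q _ Z _).trans (by rw [Z.comp_id])
    _ = q.eval₂ (C.comp (Polynomial.C.comp (aeval x).toRingHom)) (C Polynomial.X) := by
        simp only [Polynomial.eval₂_eq_sum, Polynomial.sum_def, hZ_coeff]
        rfl
    _ = C (q.map (aeval x).toRingHom) := by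
        rw [← Polynomial.hom_eval₂]
        rfl
    _ = W (C (minpoly (prefixField K x i) (x ⟨i, hi⟩))) := by
        rw [hmap, map_C]
        rfl

theorem IsMinpolyLift.evalPrefix_ne_zero [Algebra.IsAlgebraic K F] {p : MvPolynomial (Fin n) K}
    (hi : i < n) (hp : IsMinpolyLift K x ⟨i, hi⟩ p) : evalPrefix K x i p ≠ 0 := by
  have hint : IsIntegral (prefixField K x i) (x ⟨i, hi⟩) :=
    (Algebra.IsIntegral.isIntegral (R := K) (x ⟨i, hi⟩)).tower_top
  rw [← map_ne_zero_iff _ (isolateVar hi _).injective, hp.isolateVar_evalPrefix, Ne, C_eq_zero]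
  exact minpoly.ne_zero hint

theorem ker_evalPrefix [Algebra.IsAlgebraic K F] {P : Fin n → MvPolynomial (Fin n) K}
    (hP : ∀ i, IsMinpolyLift K x i (P i)) :
    ∀ i ≤ n, RingHom.ker (evalPrefix K x i) = Ideal.span (P '' {j | (j : ℕ) < i}) := by
  intro i
  induction i with
  | zero =>
    intro _
    simp [(RingHom.injective_iff_ker_eq_bot _).mp (evalPrefix_zero_injective K x)]
  | succ i ih =>
    intro (hi : i < n)
    have hker_step : RingHom.ker (evalNext K x hi) = Ideal.span {evalPrefix K x i (P ⟨i, hi⟩)} := by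
      rw [ker_evalNext, (isolateVar hi _).symm_apply_eq.mpr (hP ⟨i, hi⟩).isolateVar_evalPrefix.symm]
    rw [← evalNext_comp_evalPrefix K x hi,
      RingHom.ker_comp_of_ker_eq_span_singleton (evalPrefix_surjective K x i) hker_step,
      ih hi.le, ← Ideal.span_union, ← Set.image_singleton, ← Set.image_union]
    congr 2
    ext j
    simp only [Set.mem_union, Set.mem_singleton_iff, Set.mem_ofPred_eq, Fin.ext_iff]
    omega

end

theorem stmt9_general (K F : Type*) [Field K] [Field F] [Algebra K F] [FiniteDimensional K F]
    (n : ℕ) (x : Fin n → F)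
    (P : Fin n → MvPolynomial (Fin n) K)
    (hP : ∀ i : Fin n, ∃ q : Polynomial (MvPolynomial (Fin n) K),
      q.Monic ∧
      (∀ k, q.coeff k ∈ MvPolynomial.supported K {j : Fin n | j < i}) ∧
      P i = Polynomial.aeval (MvPolynomial.X i) q ∧
      q.map (MvPolynomial.aeval x : MvPolynomial (Fin n) K →ₐ[K] F).toRingHom =
        (minpoly ↥(IntermediateField.adjoin K (x '' {j : Fin n | j < i})) (x i)).map
          (algebraMap ↥(IntermediateField.adjoin K (x '' {j : Fin n | j < i})) F)) :
    RingTheory.Sequence.IsRegular (MvPolynomial (Fin n) K) (List.ofFn P) ∧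
      RingHom.ker (MvPolynomial.aeval x : MvPolynomial (Fin n) K →ₐ[K] F).toRingHom =
        Ideal.span (Set.range P) := by
  have hlift (i : Fin n) : IsMinpolyLift K x i (P i) := (hP i).imp fun _ h => h.2
  have hker := ker_evalPrefix hlift
  have hspan : RingHom.ker (aeval x : MvPolynomial (Fin n) K →ₐ[K] F).toRingHom =
      Ideal.span (Set.range P) := by
    rw [ker_aeval_eq_ker_evalPrefix, hker n le_rfl, ← Set.image_univ]
    congr 2
    exact Set.eq_univ_of_forall fun j => j.2
  refine ⟨RingTheory.Sequence.isRegular_ofFn_of_ker_eq_span (fun i => evalPrefix K x i)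
    (fun i => hker i i.2.le) (fun i => (hlift i).evalPrefix_ne_zero i.2) ?_, hspan⟩
  rw [← hspan]
  exact RingHom.ker_ne_top _

/-- Given a finite field extension `F/K` generated by `x₁, …, x_n` and polynomials
`P i ∈ K[X₁,…,X_i]` which are monic in `X_i` and map to the minimal polynomial of
`x_i` over `K(x₁,…,x_{i-1})`, the `P i` form a regular sequence generating the kernel
of evaluation `K[X₁,…,X_n] → F`. -/
theorem stmt9 (K F : Type*) [Field K] [Field F] [Algebra K F] [FiniteDimensional K F]
    (n : ℕ) (x : Fin n → F)
    (hgen : IntermediateField.adjoin K (Set.range x) = ⊤)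
    (P : Fin n → MvPolynomial (Fin n) K)
    (hP : ∀ i : Fin n, ∃ q : Polynomial (MvPolynomial (Fin n) K),
      q.Monic ∧
      (∀ k, q.coeff k ∈ MvPolynomial.supported K {j : Fin n | j < i}) ∧
      P i = Polynomial.aeval (MvPolynomial.X i) q ∧
      q.map (MvPolynomial.aeval x : MvPolynomial (Fin n) K →ₐ[K] F).toRingHom =
        (minpoly ↥(IntermediateField.adjoin K (x '' {j : Fin n | j < i})) (x i)).map
          (algebraMap ↥(IntermediateField.adjoin K (x '' {j : Fin n | j < i})) F)) :
    RingTheory.Sequence.IsRegular (MvPolynomial (Fin n) K) (List.ofFn P) ∧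
      RingHom.ker (MvPolynomial.aeval x : MvPolynomial (Fin n) K →ₐ[K] F).toRingHom =
        Ideal.span (Set.range P) :=
  stmt9_general K F n x P hP
end

section
/- Let F/K be a finite purely inseparable field extension of characteristic p > 0 and exponent n, and suppose α ∈ F satisfies F = (F^p K)(α). Then F = K(α); that is, if F is generated over F^p K by a single element, F is a simple extension of K. -/
/-!
Raising to the `p^e`-th power is a ring endomorphism in characteristic `p`, so it maps
`K(S)` into `K(S^{p^e})`. Applied to `F = K(α, F^p)` this gives `F^{p^e} ⊆ K(α, F^{p^{e+1}})`,
hence `F = K(α, F^{p^e})` for every `e` by induction. For `e = n` the field `F^{p^n}` lies in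
`K`, so `F = K(α)`.
-/

namespace IntermediateField

variable {K F : Type*} [Field K] [Field F] [Algebra K F]

theorem pow_mem_adjoin_image_pow_expChar_pow (p : ℕ) [ExpChar F p] (e : ℕ) {S : Set F} {y : F}
    (hy : y ∈ adjoin K S) : y ^ p ^ e ∈ adjoin K ((· ^ p ^ e) '' S) := by
  induction hy using adjoin_induction with
  | mem z hz => exact subset_adjoin K _ ⟨z, hz, rfl⟩
  | algebraMap c => exact map_pow (algebraMap K F) c _ ▸ algebraMap_mem _ _
  | add x y _ _ hx hy => exact add_pow_expChar_pow x y p e ▸ add_mem hx hy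
  | inv x _ hx => exact inv_pow x _ ▸ inv_mem hx
  | mul x y _ _ hx hy => exact mul_pow x y _ ▸ mul_mem hx hy

theorem adjoin_insert_range_pow_expChar_pow_eq_top (p : ℕ) [ExpChar F p] {α : F}
    (h : adjoin K (insert α (Set.range (· ^ p))) = ⊤) (e : ℕ) :
    adjoin K (insert α (Set.range (· ^ p ^ e))) = ⊤ := by
  induction e with
  | zero => exact eq_top_iff.2 fun x _ ↦ subset_adjoin K _ (Or.inr ⟨x, pow_one x⟩)
  | succ e ih =>
    set A := adjoin K (insert α (Set.range (· ^ p ^ (e + 1))))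
    have hα : α ∈ A := subset_adjoin K _ (Set.mem_insert α _)
    have hpow : ∀ y : F, y ^ p ^ e ∈ A := by
      intro y
      have hy : y ^ p ^ e ∈ adjoin K ((· ^ p ^ e) '' insert α (Set.range (· ^ p))) :=
        pow_mem_adjoin_image_pow_expChar_pow p e (h ▸ mem_top)
      refine adjoin_le_iff.2 ?_ hy
      rintro _ ⟨_, rfl | ⟨x, rfl⟩, rfl⟩
      · exact pow_mem hα _
      · show (x ^ p) ^ p ^ e ∈ A
        rw [← pow_mul, ← pow_succ']
        exact subset_adjoin K _ (Or.inr ⟨x, rfl⟩)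
    rw [eq_top_iff, ← ih, adjoin_le_iff]
    rintro _ (rfl | ⟨y, rfl⟩)
    exacts [hα, hpow y]

theorem adjoin_insert_range_pow_eq_adjoin_simple {q : ℕ}
    (hq : ∀ x : F, x ^ q ∈ (algebraMap K F).range) (α : F) :
    adjoin K (insert α (Set.range (· ^ q))) = adjoin K {α} := by
  refine le_antisymm (adjoin_le_iff.2 ?_)
    (adjoin_simple_le_iff.2 (subset_adjoin K _ (Set.mem_insert α _)))
  rintro _ (rfl | ⟨x, rfl⟩)
  · exact mem_adjoin_simple_self K _
  · obtain ⟨c, hc⟩ := hq x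
    exact (show x ^ q ∈ adjoin K {α} from hc ▸ algebraMap_mem _ c)

end IntermediateField

open IntermediateField in
theorem stmt13_general (p n : ℕ) [Fact p.Prime] (K F : Type*) [Field K] [Field F] [Algebra K F]
    [CharP F p]
    (hexp : ∀ x : F, x ^ p ^ n ∈ (algebraMap K F).range)
    (E : IntermediateField K F)
    (hE : E = IntermediateField.adjoin K (Set.range fun x : F => x ^ p))
    (α : F) (hgen : IntermediateField.adjoin ↥E {α} = ⊤) :
    IntermediateField.adjoin K {α} = ⊤ := by
  subst hE
  have h₁ : adjoin K (insert α (Set.range (· ^ p))) = ⊤ := by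
    rw [← Set.union_singleton, ← adjoin_adjoin_left, hgen, restrictScalars_top]
  rw [← adjoin_insert_range_pow_eq_adjoin_simple hexp α]
  exact adjoin_insert_range_pow_expChar_pow_eq_top p h₁ n

/-- If a finite purely inseparable extension `F/K` of exponent `n` is generated over
`F^pK` by a single element `α`, then `F = K(α)`. -/
theorem stmt13 (p n : ℕ) [Fact p.Prime] (K F : Type*) [Field K] [Field F] [Algebra K F]
    [CharP F p] [FiniteDimensional K F] [IsPurelyInseparable K F]
    (hexp : ∀ x : F, x ^ p ^ n ∈ (algebraMap K F).range)
    (E : IntermediateField K F)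
    (hE : E = IntermediateField.adjoin K (Set.range fun x : F => x ^ p))
    (α : F) (hgen : IntermediateField.adjoin ↥E {α} = ⊤) :
    IntermediateField.adjoin K {α} = ⊤ :=
  stmt13_general p n K F hexp E hE α hgen
end

section
/- Let F/K be a finite purely inseparable field extension of characteristic p > 0. Then F/K is a nontrivial simple extension (i.e., F = K(α) for some α ∉ K) if and only if dim_F Ω¹_{F/K} = 1. -/
/-!
For a finite extension of fields, `Ω[F⁄L] = 0` exactly when `F/L` is separable (formally
unramified), and a purely inseparable separable extension is trivial. Since `Ω[F⁄K]` is spanned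
by the differentials of algebra generators, `F = K(α)` forces `Ω[F⁄K] = F·dα` with `dα ≠ 0`.
Conversely, if `dα` spans the line `Ω[F⁄K]`, then `Ω[F⁄K(α)]`, being a quotient of `Ω[F⁄K]`
in which `dα` dies, vanishes, so `F = K(α)`.
-/

open KaehlerDifferential

namespace KaehlerDifferential

variable {R S : Type*} [CommRing R] [CommRing S] [Algebra R S]

theorem span_D_image_eq_top_of_adjoin_eq_top {s : Set S} (hs : Algebra.adjoin R s = ⊤) :
    Submodule.span S (D R S '' s) = ⊤ := by
  set N := Submodule.span S (D R S '' s)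
  let D' : Derivation R S (Ω[S⁄R] ⧸ N) := N.mkQ.compDer (D R S)
  have hD' : Set.EqOn D' (0 : Derivation R S _) (Algebra.adjoin R s) :=
    Derivation.eqOn_adjoin fun x hx => (Submodule.Quotient.mk_eq_zero N).2 <|
      Submodule.subset_span ⟨x, hx, rfl⟩
  rw [eq_top_iff, ← span_range_derivation, Submodule.span_le]
  rintro _ ⟨x, rfl⟩
  exact (Submodule.Quotient.mk_eq_zero N).1 (hD' (hs ▸ Algebra.mem_top))

theorem exists_D_ne_zero [Nontrivial Ω[S⁄R]] : ∃ x : S, D R S x ≠ 0 := by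
  by_contra! h
  have : (⊤ : Submodule S Ω[S⁄R]) = ⊥ := by
    rw [← span_range_derivation, Submodule.span_eq_bot]
    rintro _ ⟨x, rfl⟩
    exact h x
  exact bot_ne_top this.symm

variable (R) {A B : Type*} [CommRing A] [CommRing B] [Algebra R A] [Algebra A B] [Algebra R B]
  [IsScalarTower R A B]

theorem subsingleton_of_span_D_range_eq_top
    (h : Submodule.span B (D R B '' Set.range (algebraMap A B)) = ⊤) : Subsingleton Ω[B⁄A] := by
  have hker : LinearMap.ker (map R A B B) = ⊤ := by
    rw [eq_top_iff, ← h, Submodule.span_le]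
    rintro _ ⟨_, ⟨a, rfl⟩, rfl⟩
    simp
  rw [LinearMap.ker_eq_top] at hker
  refine ⟨fun ω η => ?_⟩
  obtain ⟨ω, rfl⟩ := map_surjective R A B ω
  obtain ⟨η, rfl⟩ := map_surjective R A B η
  simp [hker]

end KaehlerDifferential

section PurelyInseparable

variable {K F : Type*} [Field K] [Field F] [Algebra K F] [FiniteDimensional K F]
  [IsPurelyInseparable K F]

variable (K F) in
theorem IsPurelyInseparable.surjective_algebraMap_of_subsingleton_kaehlerDifferential
    [Subsingleton Ω[F⁄K]] : Function.Surjective (algebraMap K F) :=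
  have : Algebra.FormallyUnramified K F := ⟨inferInstance⟩
  have := (Algebra.FormallyUnramified.iff_isSeparable K F).1 this
  surjective_algebraMap_of_isSeparable K F

theorem IsPurelyInseparable.nontrivial_kaehlerDifferential {α : F}
    (hα : α ∉ (algebraMap K F).range) : Nontrivial Ω[F⁄K] := by
  rw [← not_subsingleton_iff_nontrivial]
  intro
  exact hα (surjective_algebraMap_of_subsingleton_kaehlerDifferential K F α)

theorem IntermediateField.eq_top_of_subsingleton_kaehlerDifferential
    (L : IntermediateField K F) [Subsingleton Ω[F⁄L]] : L = ⊤ :=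
  eq_top_iff.2 fun x _ => by
    obtain ⟨y, rfl⟩ :=
      IsPurelyInseparable.surjective_algebraMap_of_subsingleton_kaehlerDifferential L F x
    exact y.2

end PurelyInseparable

theorem KaehlerDifferential.span_D_eq_top_of_adjoin_simple_eq_top {K F : Type*} [Field K]
    [Field F] [Algebra K F] [Algebra.IsAlgebraic K F] {α : F}
    (hα : IntermediateField.adjoin K {α} = ⊤) : Submodule.span F {D K F α} = ⊤ := by
  have := IntermediateField.adjoin_simple_toSubalgebra_of_isAlgebraic
    (Algebra.IsAlgebraic.isAlgebraic (R := K) α)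
  rw [hα, IntermediateField.top_toSubalgebra] at this
  simpa using span_D_image_eq_top_of_adjoin_eq_top this.symm

theorem IntermediateField.subsingleton_kaehlerDifferential_adjoin_simple {K F : Type*} [Field K]
    [Field F] [Algebra K F] {α : F} (hα : Submodule.span F {D K F α} = ⊤) :
    Subsingleton Ω[F⁄adjoin K {α}] := by
  refine subsingleton_of_span_D_range_eq_top K (top_le_iff.1 (hα ▸ Submodule.span_mono ?_))
  exact Set.singleton_subset_iff.2 ⟨_, ⟨⟨α, mem_adjoin_simple_self K α⟩, rfl⟩, rfl⟩

theorem stmt14_general (K F : Type*) [Field K] [Field F] [Algebra K F]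
    [FiniteDimensional K F] [IsPurelyInseparable K F] :
    (∃ α : F, α ∉ (algebraMap K F).range ∧ IntermediateField.adjoin K {α} = ⊤) ↔
      Module.finrank F (Ω[F⁄K]) = 1 := by
  constructor
  · rintro ⟨α, hα, hKα⟩
    have := IsPurelyInseparable.nontrivial_kaehlerDifferential hα
    have hspan := span_D_eq_top_of_adjoin_simple_eq_top hKα
    have hDα : D K F α ≠ 0 := by
      intro h0
      rw [h0, Submodule.span_singleton_eq_bot.2 rfl] at hspan
      exact bot_ne_top hspan
    exact (finrank_eq_one_iff_of_nonzero _ hDα).2 hspan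
  · intro h1
    have := Module.nontrivial_of_finrank_eq_succ h1
    obtain ⟨α, hDα⟩ := exists_D_ne_zero (R := K) (S := F)
    refine ⟨α, fun ⟨c, hc⟩ => hDα (hc ▸ (D K F).map_algebraMap c), ?_⟩
    have := IntermediateField.subsingleton_kaehlerDifferential_adjoin_simple
      ((finrank_eq_one_iff_of_nonzero _ hDα).1 h1)
    exact IntermediateField.eq_top_of_subsingleton_kaehlerDifferential _

/-- A finite purely inseparable extension `F/K` is a nontrivial simple extension
iff `dim_F Ω¹_{F/K} = 1`. -/
theorem stmt14 (p : ℕ) [Fact p.Prime] (K F : Type*) [Field K] [Field F] [Algebra K F]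
    [CharP F p] [FiniteDimensional K F] [IsPurelyInseparable K F] :
    (∃ α : F, α ∉ (algebraMap K F).range ∧ IntermediateField.adjoin K {α} = ⊤) ↔
      Module.finrank F (Ω[F⁄K]) = 1 :=
  stmt14_general K F
end

section
/- Let F/K be a finite purely inseparable field extension of characteristic p > 0 and let F' be an intermediate field K ⊆ F' ⊆ F such that F = F' F^p (the compositum of F' and the p-th powers of F). Then F = F'. -/
/-!
Frobenius is a ring endomorphism mapping `F'` into itself, so from `F = F'(F^p)` one gets
`F^p ⊆ F'(F^{p^2})`, hence `F = F'(F^{p^2})`, and inductively `F = F'(F^{p^n})` for every `n`.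
Since `F/F'` is finite purely inseparable it has an exponent `e` with `F^{p^e} ⊆ F'`, and then
`F = F'(F^{p^e}) = F'`.
-/

namespace IntermediateField

variable {k E : Type*} [Field k] [Field E] [Algebra k E] (p : ℕ) [ExpChar E p]

theorem pow_mem_adjoin_image_pow {S : Set E} {x : E} (hx : x ∈ adjoin k S) :
    x ^ p ∈ adjoin k ((· ^ p) '' S) := by
  let T := adjoin k ((· ^ p) '' S)
  let frobeniusPreimage : IntermediateField k E :=
    (T.toSubfield.comap (frobenius E p)).toIntermediateField fun c =>
      pow_mem (T.algebraMap_mem c) p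
  have : adjoin k S ≤ frobeniusPreimage :=
    adjoin_le_iff.2 fun s hs => subset_adjoin _ _ ⟨s, hs, rfl⟩
  exact this hx

theorem adjoin_range_pow_pow_eq_top (h : adjoin k (Set.range fun x : E => x ^ p) = ⊤) (n : ℕ) :
    adjoin k (Set.range fun x : E => x ^ p ^ n) = ⊤ := by
  induction n with
  | zero => simp
  | succ n ih =>
    rw [eq_top_iff, ← h, adjoin_le_iff]
    rintro _ ⟨x, rfl⟩
    have hx : x ∈ adjoin k (Set.range fun x : E => x ^ p ^ n) := ih ▸ mem_top
    simpa [← Set.range_comp, Function.comp_def, ← pow_mul, ← pow_succ] using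
      pow_mem_adjoin_image_pow p hx

theorem bot_eq_top_of_adjoin_range_pow_eq_top [IsPurelyInseparable.HasExponent k E] [ExpChar k p]
    (h : adjoin k (Set.range fun x : E => x ^ p) = ⊤) : (⊥ : IntermediateField k E) = ⊤ := by
  rw [← adjoin_range_pow_pow_eq_top p h (IsPurelyInseparable.exponent k E), eq_comm,
    adjoin_eq_bot_iff]
  rintro _ ⟨x, rfl⟩
  exact IsPurelyInseparable.exponent_def' k p x

end IntermediateField

open IntermediateField

/-- If `F/K` is finite purely inseparable and `F'` is an intermediate field with
`F = F' F^p`, then `F = F'`. -/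
theorem stmt15 (p : ℕ) [Fact p.Prime] (K F : Type*) [Field K] [Field F] [Algebra K F]
    [CharP F p] [FiniteDimensional K F] [IsPurelyInseparable K F]
    (F' : IntermediateField K F)
    (h : IntermediateField.adjoin ↥F' (Set.range fun x : F => x ^ p) = ⊤) :
    F' = ⊤ := by
  have hbot : (⊥ : IntermediateField F' F) = ⊤ := bot_eq_top_of_adjoin_range_pow_eq_top p h
  rw [eq_top_iff]
  intro x _
  obtain ⟨c, rfl⟩ := mem_bot.1 (hbot ▸ mem_top : x ∈ (⊥ : IntermediateField F' F))
  exact c.2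
end
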